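/- B-entailment satisfies both B-transitivities (cut): (t) if (Γ ∪ {α} | Ψ ⊨ Φ | Δ) and (Γ | Ψ ⊨ Φ | Δ ∪ {α}) are valid then (Γ | Ψ ⊨ Φ | Δ) is valid; (f) if (Γ | Ψ ∪ {α} ⊨ Φ | Δ) and (Γ | Ψ ⊨ Φ ∪ {α} | Δ) are valid then (Γ | Ψ ⊨ Φ | Δ) is valid. -/

import Mathlib

/-- The four truth-values of Dunn-Belnap logic. -/
inductive Four where
  | f | bot | top | t
deriving DecidableEq, Repr

namespace Four

/-- Whether the value contains the classical value T. -/
def hasT : Four → Bool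
  | t => true | top => true | _ => false

/-- Whether the value contains the classical value F. -/
def hasF : Four → Bool
  | f => true | top => true | _ => false

/-- Build a value from its T-part and F-part. -/
def mk : Bool → Bool → Four
  | true, true => top
  | true, false => t
  | false, true => f
  | false, false => bot

/-- Logical order: x ≤_t y iff x∩{T} ⊆ y∩{T} and y∩{F} ⊆ x∩{F}. -/
def leT (x y : Four) : Prop :=
  (x.hasT = true → y.hasT = true) ∧ (y.hasF = true → x.hasF = true)

/-- Information order: x ≤_i y iff x ⊆ y. -/
def leI (x y : Four) : Prop :=
  (x.hasT = true → y.hasT = true) ∧ (x.hasF = true → y.hasF = true)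

/-- Negation: swaps T and F membership. -/
def negT (x : Four) : Four := mk x.hasF x.hasT

/-- Infimum w.r.t. the logical order. -/
def meetT (x y : Four) : Four := mk (x.hasT && y.hasT) (x.hasF || y.hasF)

/-- Supremum w.r.t. the logical order. -/
def joinT (x y : Four) : Four := mk (x.hasT || y.hasT) (x.hasF && y.hasF)

/-- Infimum w.r.t. the information order. -/
def meetI (x y : Four) : Four := mk (x.hasT && y.hasT) (x.hasF && y.hasF)

/-- Supremum w.r.t. the information order. -/
def joinI (x y : Four) : Four := mk (x.hasT || y.hasT) (x.hasF || y.hasF)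

/-- Acceptance: designated set Y = {⊤, t}. -/
def acc (x : Four) : Prop := x = top ∨ x = t

/-- Rejection: set N = {f, ⊤}. -/
def rej (x : Four) : Prop := x = f ∨ x = top

end Four

/-- Formulas of the language S: propositional variables, ¬, ∧, ∨. -/
inductive Form where
  | var : ℕ → Form
  | neg : Form → Form
  | conj : Form → Form → Form
  | disj : Form → Form → Form
deriving DecidableEq

/-- A valuation (agent) is determined by its values on variables; it is
extended homomorphically to all formulas. -/
def Form.eval (v : ℕ → Four) : Form → Four
  | var n => v n
  | neg φ => (φ.eval v).negT
  | conj φ ψ => (φ.eval v).meetT (ψ.eval v)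
  | disj φ ψ => (φ.eval v).joinT (ψ.eval v)

open Four Form

/-- Truth-preserving (Tarskian) entailment ⊨ᵗ = ⊨⁴. -/
def entT (Γ : Set Form) (α : Form) : Prop :=
  ¬ ∃ v : ℕ → Four, (∀ γ ∈ Γ, acc (γ.eval v)) ∧ ¬ acc (α.eval v)

/-- Falsity entailment ⊨ᶠ: no valuation not-rejects all premises while rejecting the conclusion. -/
def entF (Γ : Set Form) (α : Form) : Prop :=
  ¬ ∃ v : ℕ → Four, (∀ γ ∈ Γ, ¬ rej (γ.eval v)) ∧ rej (α.eval v)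

/-- q-entailment: no valuation not-rejects all premises while not-accepting the conclusion. -/
def entQ (Γ : Set Form) (α : Form) : Prop :=
  ¬ ∃ v : ℕ → Four, (∀ γ ∈ Γ, ¬ rej (γ.eval v)) ∧ ¬ acc (α.eval v)

/-- p-entailment: no valuation accepts all premises while rejecting the conclusion. -/
def entP (Γ : Set Form) (α : Form) : Prop :=
  ¬ ∃ v : ℕ → Four, (∀ γ ∈ Γ, acc (γ.eval v)) ∧ rej (α.eval v)

/-- B-entailment (Γ | Ψ ⊨ Φ | Δ): no valuation accepts all of Γ,
not-accepts all of Δ, rejects all of Φ and not-rejects all of Ψ. -/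
def Bent (Γ Ψ Φ Δ : Set Form) : Prop :=
  ¬ ∃ v : ℕ → Four,
    (∀ γ ∈ Γ, acc (γ.eval v)) ∧ (∀ δ ∈ Δ, ¬ acc (δ.eval v)) ∧
    (∀ φ ∈ Φ, rej (φ.eval v)) ∧ (∀ ψ ∈ Ψ, ¬ rej (ψ.eval v))

theorem Bent_cut_acc {Γ Ψ Φ Δ : Set Form} {α : Form}
    (h_acc : Bent (Γ ∪ {α}) Ψ Φ Δ) (h_nacc : Bent Γ Ψ Φ (Δ ∪ {α})) : Bent Γ Ψ Φ Δ := by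
  rintro ⟨v, hΓ, hΔ, hΦ, hΨ⟩
  rw [Set.union_singleton] at h_acc h_nacc
  by_cases hα : acc (α.eval v)
  · exact h_acc ⟨v, Set.forall_mem_insert.2 ⟨hα, hΓ⟩, hΔ, hΦ, hΨ⟩
  · exact h_nacc ⟨v, hΓ, Set.forall_mem_insert.2 ⟨hα, hΔ⟩, hΦ, hΨ⟩

theorem Bent_cut_rej {Γ Ψ Φ Δ : Set Form} {α : Form}
    (h_nrej : Bent Γ (Ψ ∪ {α}) Φ Δ) (h_rej : Bent Γ Ψ (Φ ∪ {α}) Δ) : Bent Γ Ψ Φ Δ := by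
  rintro ⟨v, hΓ, hΔ, hΦ, hΨ⟩
  rw [Set.union_singleton] at h_nrej h_rej
  by_cases hα : rej (α.eval v)
  · exact h_rej ⟨v, hΓ, hΔ, Set.forall_mem_insert.2 ⟨hα, hΦ⟩, hΨ⟩
  · exact h_nrej ⟨v, hΓ, hΔ, hΦ, Set.forall_mem_insert.2 ⟨hα, hΨ⟩⟩

/-- B-entailment satisfies both B-transitivities (cuts). -/
theorem Bent_transitivities :
    (∀ (Γ Ψ Φ Δ : Set Form) (α : Form),
      Bent (Γ ∪ {α}) Ψ Φ Δ → Bent Γ Ψ Φ (Δ ∪ {α}) → Bent Γ Ψ Φ Δ) ∧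
    (∀ (Γ Ψ Φ Δ : Set Form) (α : Form),
      Bent Γ (Ψ ∪ {α}) Φ Δ → Bent Γ Ψ (Φ ∪ {α}) Δ → Bent Γ Ψ Φ Δ) :=
  ⟨fun _ _ _ _ _ => Bent_cut_acc, fun _ _ _ _ _ => Bent_cut_rej⟩
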